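/- arXiv:2104.15033 — 3 statements merged into one kernel-verified Lean document; each statement's English description precedes it below -/
import Mathlib

section
/- If T is a hypercyclic and multiply recurrent continuous linear operator on a separable Fréchet space, then every hypercyclic vector for T is an AP-hypercyclic vector, i.e., for every hypercyclic vector x and every nonempty open set U, the return set N_T(x,U) contains arbitrarily long arithmetic progressions. -/
open Filter Topology

def ContainsAPs (A : Set ℕ) : Prop :=
  ∀ m : ℕ, ∃ a k : ℕ, 1 ≤ a ∧ 1 ≤ k ∧ ∀ j ≤ m, a + j * k ∈ A

/-!
Multiple recurrence applied to `U` yields a nonempty open set `V` of points `y` with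
`f^[j * k] y ∈ U` for all `j ≤ m + 1`. A dense orbit enters `V` at some time `n`, and then
`n + k, n + 2k, …, n + (m + 1) k` is an arithmetic progression in the return set of `U`.
-/

open Function

section Dynamics

variable {X : Type*} [TopologicalSpace X]

def MultiplyRecurrent (f : X → X) : Prop :=
  ∀ U : Set X, IsOpen U → U.Nonempty → ∀ m : ℕ,
    ∃ k : ℕ, 1 ≤ k ∧ ∃ x ∈ U, ∀ j ≤ m, f^[j * k] x ∈ U

theorem isOpen_setOf_forall_iterate_mul_mem {f : X → X} (hf : Continuous f) {U : Set X}
    (hU : IsOpen U) (m k : ℕ) : IsOpen {y | ∀ j ≤ m, f^[j * k] y ∈ U} := by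
  convert (Set.finite_Iic m).isOpen_biInter fun j _ => hU.preimage (hf.iterate (j * k))
  ext
  simp

theorem MultiplyRecurrent.containsAPs_of_denseRange_iterate {f : X → X} (hf : Continuous f)
    (hrec : MultiplyRecurrent f) {x : X} (hx : DenseRange fun n : ℕ => f^[n] x)
    {U : Set X} (hU : IsOpen U) (hUne : U.Nonempty) : ContainsAPs {n | f^[n] x ∈ U} := by
  intro m
  obtain ⟨k, hk, y, -, hy⟩ := hrec U hU hUne (m + 1)
  obtain ⟨n, hn⟩ :=
    hx.exists_mem_open (isOpen_setOf_forall_iterate_mul_mem hf hU (m + 1) k) ⟨y, hy⟩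
  refine ⟨n + k, k, by omega, hk, fun j hj => ?_⟩
  have hmem : f^[(j + 1) * k] (f^[n] x) ∈ U := hn (j + 1) (by omega)
  rwa [← iterate_add_apply, show (j + 1) * k + n = n + k + j * k by ring] at hmem

end Dynamics

theorem hypercyclic_multiplyRecurrent_implies_every_HC_vector_is_AP_general
    {X : Type*} [AddCommGroup X] [Module ℝ X] [UniformSpace X]
    (T : X →L[ℝ] X)
    (hmr : ∀ U : Set X, IsOpen U → U.Nonempty → ∀ m : ℕ,
        ∃ k : ℕ, 1 ≤ k ∧ ∃ x ∈ U, ∀ j ≤ m, (T ^ (j * k)) x ∈ U) :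
    ∀ x : X, Dense (Set.range fun n : ℕ => (T ^ n) x) →
      ∀ U : Set X, IsOpen U → U.Nonempty → ContainsAPs {n : ℕ | (T ^ n) x ∈ U} := by
  simp only [FunLike.coe_pow_eq_iterate] at hmr ⊢
  exact fun x hx U hU hUne => MultiplyRecurrent.containsAPs_of_denseRange_iterate
    T.continuous hmr hx hU hUne

theorem hypercyclic_multiplyRecurrent_implies_every_HC_vector_is_AP
    {X : Type*} [AddCommGroup X] [Module ℝ X] [UniformSpace X] [IsUniformAddGroup X]
    [ContinuousSMul ℝ X] [LocallyConvexSpace ℝ X] [CompleteSpace X]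
    [TopologicalSpace.MetrizableSpace X] [TopologicalSpace.SeparableSpace X]
    (T : X →L[ℝ] X)
    (hhc : ∃ x : X, Dense (Set.range fun n : ℕ => (T ^ n) x))
    (hmr : ∀ U : Set X, IsOpen U → U.Nonempty → ∀ m : ℕ,
        ∃ k : ℕ, 1 ≤ k ∧ ∃ x ∈ U, ∀ j ≤ m, (T ^ (j * k)) x ∈ U) :
    ∀ x : X, Dense (Set.range fun n : ℕ => (T ^ n) x) →
      ∀ U : Set X, IsOpen U → U.Nonempty → ContainsAPs {n : ℕ | (T ^ n) x ∈ U} :=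
  hypercyclic_multiplyRecurrent_implies_every_HC_vector_is_AP_general T hmr
end

section
/- If T is a continuous linear operator on a separable Fréchet space such that for every pair of nonempty open sets U, V and every m there is x ∈ U with N_T(x,V) containing an arithmetic progression of length m, then the set of AP-hypercyclic vectors for T is residual (comeager) in X. -/
open Filter Topology

/-!
Fix a countable basis. For a basic open set `V` and a length `m`, the points with `m + 1` orbit
times in arithmetic progression landing in `V` form an open set (a union of finite intersections
of preimages of `V`), and the hypothesis says it meets every nonempty open set. The intersection of
these countably many dense open sets is residual, and a point in it has arbitrarily long
progressions of visits to every basic set, hence to every nonempty open set.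
-/

theorem ContainsAPs.mono {A B : Set ℕ} (hA : ContainsAPs A) (hAB : A ⊆ B) : ContainsAPs B :=
  fun m => (hA m).imp fun _ => Exists.imp fun _ ⟨ha, hk, hA⟩ => ⟨ha, hk, fun j hj => hAB (hA j hj)⟩

theorem TopologicalSpace.secondCountableTopology_of_separableSpace {X : Type*} [TopologicalSpace X]
    [PseudoMetrizableSpace X] [SeparableSpace X] : SecondCountableTopology X :=
  let := pseudoMetrizableSpaceUniformity X
  have := pseudoMetrizableSpaceUniformity_countably_generated X
  UniformSpace.secondCountable_of_separable X

def apVisitSet {X : Type*} (f : ℕ → X → X) (V : Set X) (m : ℕ) : Set X :=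
  {x | ∃ a k : ℕ, 1 ≤ a ∧ 1 ≤ k ∧ ∀ j ≤ m, f (a + j * k) x ∈ V}

section APRecurrence

variable {X : Type*} [TopologicalSpace X] {f : ℕ → X → X}

theorem isOpen_apVisitSet (hf : ∀ n, Continuous (f n)) {V : Set X} (hV : IsOpen V) (m : ℕ) :
    IsOpen (apVisitSet f V m) := by
  have : apVisitSet f V m = ⋃ (a : ℕ) (k : ℕ) (_ : 1 ≤ a) (_ : 1 ≤ k),
      ⋂ j ∈ Set.Iic m, f (a + j * k) ⁻¹' V := by
    ext x
    simp only [apVisitSet, Set.mem_ofPred_eq, Set.mem_iUnion, Set.mem_iInter, Set.mem_preimage,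
      Set.mem_Iic, exists_prop]
  rw [this]
  exact isOpen_iUnion fun a => isOpen_iUnion fun k => isOpen_iUnion fun _ => isOpen_iUnion fun _ =>
    (Set.finite_Iic m).isOpen_biInter fun j _ => hV.preimage (hf _)

theorem residual_setOf_forall_containsAPs [SecondCountableTopology X]
    (hf : ∀ n, Continuous (f n))
    (h : ∀ U V : Set X, IsOpen U → U.Nonempty → IsOpen V → V.Nonempty →
        ∀ m : ℕ, ∃ x ∈ U, ∃ a k : ℕ, 1 ≤ a ∧ 1 ≤ k ∧ ∀ j < m, f (a + j * k) x ∈ V) :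
    {x : X | ∀ U : Set X, IsOpen U → U.Nonempty → ContainsAPs {n | f n x ∈ U}} ∈ residual X := by
  obtain ⟨b, hbc, hb_ne, hb⟩ := TopologicalSpace.exists_countable_basis X
  have hdense (V) (hV : V ∈ b) (m : ℕ) : Dense (apVisitSet f V m) := by
    refine dense_iff_inter_open.2 fun U hU hU_ne => ?_
    obtain ⟨x, hxU, a, k, ha, hk, hx⟩ :=
      h U V hU hU_ne (hb.isOpen hV) (Set.nonempty_iff_ne_empty.2 (ne_of_mem_of_not_mem hV hb_ne))
        (m + 1)
    exact ⟨x, hxU, a, k, ha, hk, fun j hj => hx j (Nat.lt_succ_of_le hj)⟩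
  have hmem : (⋂ V ∈ b, ⋂ m : ℕ, apVisitSet f V m) ∈ residual X :=
    (countable_bInter_mem hbc).2 fun V hV => countable_iInter_mem.2 fun m =>
      residual_of_dense_open (isOpen_apVisitSet hf (hb.isOpen hV) m) (hdense V hV m)
  refine mem_of_superset hmem fun x hx U hU ⟨y, hyU⟩ => ?_
  obtain ⟨V, hVb, hyV, hVU⟩ := hb.exists_subset_of_mem_open hyU hU
  have hxV : ContainsAPs {n | f n x ∈ V} := Set.mem_iInter.1 (Set.mem_iInter₂.1 hx V hVb)
  exact hxV.mono fun n hn => hVU hn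

end APRecurrence

theorem AP_hypercyclic_vectors_residual_general
    {X : Type*} [AddCommGroup X] [Module ℝ X] [UniformSpace X]
    [TopologicalSpace.MetrizableSpace X] [TopologicalSpace.SeparableSpace X]
    (T : X →L[ℝ] X)
    (h : ∀ U V : Set X, IsOpen U → U.Nonempty → IsOpen V → V.Nonempty →
        ∀ m : ℕ, ∃ x ∈ U, ∃ a k : ℕ, 1 ≤ a ∧ 1 ≤ k ∧
          ∀ j < m, (T ^ (a + j * k)) x ∈ V) :
    {x : X | ∀ U : Set X, IsOpen U → U.Nonempty →
        ContainsAPs {n : ℕ | (T ^ n) x ∈ U}} ∈ residual X :=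
  have := TopologicalSpace.secondCountableTopology_of_separableSpace (X := X)
  residual_setOf_forall_containsAPs (f := fun n => T ^ n) (fun n => (T ^ n).continuous) h

theorem AP_hypercyclic_vectors_residual
    {X : Type*} [AddCommGroup X] [Module ℝ X] [UniformSpace X] [IsUniformAddGroup X]
    [ContinuousSMul ℝ X] [LocallyConvexSpace ℝ X] [CompleteSpace X]
    [TopologicalSpace.MetrizableSpace X] [TopologicalSpace.SeparableSpace X]
    (T : X →L[ℝ] X)
    (h : ∀ U V : Set X, IsOpen U → U.Nonempty → IsOpen V → V.Nonempty →
        ∀ m : ℕ, ∃ x ∈ U, ∃ a k : ℕ, 1 ≤ a ∧ 1 ≤ k ∧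
          ∀ j < m, (T ^ (a + j * k)) x ∈ V) :
    {x : X | ∀ U : Set X, IsOpen U → U.Nonempty →
        ContainsAPs {n : ℕ | (T ^ n) x ∈ U}} ∈ residual X :=
  AP_hypercyclic_vectors_residual_general T h
end

section
/- Suppose T is a continuous linear operator on a separable Fréchet space X admitting a dense subset X₀ ⊆ X, a map S : X₀ → X₀ with T(S x) = x for all x ∈ X₀, and a strictly increasing sequence (m_k) of natural numbers which contains, for every m, an arithmetic progression of length m whose initial term equals its common difference (i.e., a set {q, 2q, ..., mq} for some q), such that T^{m_k} x → 0 and S^{m_k} x → 0 for every x ∈ X₀. Then T is AP-hypercyclic. -/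
open Filter Topology

/-!
Baire category argument. For a nonempty open `V` and `M ≥ 1`, the set of `x` with
`T^{jq} x ∈ V` for `j = 1, …, M` and some `q ≥ 1` is open, and it is dense: given `w, u ∈ X₀`,
the vectors `x = w + ∑_{i=1}^M S^{iq} u` tend to `w`, while `T^{jq} x → u` for each `j ≤ M`,
as `q → ∞` along common differences of progressions `q, 2q, …, Mq` inside `{m_k}` (the cross
terms are `T^{(j-i)q} u` or `S^{(i-j)q} u`, with `|i - j| q` again a term of such a progression).
A point in the countable intersection over a basis of `V` and all `M` is AP-hypercyclic.
-/

open Set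

theorem Filter.cofinite_inf_principal_range_le_map {α β : Type*} (f : α → β) :
    cofinite ⊓ 𝓟 (range f) ≤ map f cofinite := by
  intro s hs
  rw [mem_map, mem_cofinite, ← preimage_compl] at hs
  rw [mem_inf_principal', mem_cofinite, compl_union, compl_compl, inter_comm,
    ← image_preimage_eq_inter_range]
  exact hs.image f

theorem Filter.Tendsto.atTop_inf_principal_range {γ : Type*} {f : ℕ → ℕ} {g : ℕ → γ}
    {l : Filter γ} (h : Tendsto (g ∘ f) atTop l) : Tendsto g (atTop ⊓ 𝓟 (range f)) l := by
  rw [← Nat.cofinite_eq_atTop] at h ⊢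
  exact (tendsto_map'_iff.2 h).mono_left (cofinite_inf_principal_range_le_map f)

theorem exists_tendsto_mul_atTop_inf_principal {A : Set ℕ}
    (hA : ∀ m : ℕ, ∃ q : ℕ, 1 ≤ q ∧ ∀ j : ℕ, 1 ≤ j → j ≤ m → j * q ∈ A) (M : ℕ) :
    ∃ Q : ℕ → ℕ, (∀ n, 1 ≤ Q n) ∧
      ∀ j ∈ Finset.Icc 1 M, Tendsto (fun n => j * Q n) atTop (atTop ⊓ 𝓟 A) := by
  have large : ∀ n, ∃ q, n < q ∧ ∀ j ∈ Finset.Icc 1 M, j * q ∈ A := by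
    intro n
    obtain ⟨q, hq, hqA⟩ := hA (M * (n + 1))
    refine ⟨(n + 1) * q, by nlinarith, fun j hj => ?_⟩
    obtain ⟨hj1, hjM⟩ := Finset.mem_Icc.1 hj
    rw [← mul_assoc]
    exact hqA _ (Nat.one_le_iff_ne_zero.2 (by positivity)) (Nat.mul_le_mul_right _ hjM)
  choose Q hQ hQA using large
  refine ⟨Q, fun n => Nat.one_le_of_lt (hQ n), fun j hj => tendsto_inf.2 ⟨?_, ?_⟩⟩
  · exact tendsto_atTop_mono
      (fun n => (hQ n).le.trans (Nat.le_mul_of_pos_left _ (Finset.mem_Icc.1 hj).1)) tendsto_id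
  · exact tendsto_principal.2 (Eventually.of_forall fun n => hQA n j hj)

namespace Set.LeftInvOn

variable {α : Type*} {f g : α → α} {s : Set α}

theorem iterate (h : LeftInvOn f g s) (hg : MapsTo g s s) (n : ℕ) :
    LeftInvOn f^[n] g^[n] s := by
  induction n with
  | zero => exact fun _ _ => rfl
  | succ n ih =>
    intro u hu
    rw [Function.iterate_succ_apply, Function.iterate_succ_apply', h (hg.iterate n hu), ih hu]

theorem iterate_apply_iterate_of_le (h : LeftInvOn f g s) (hg : MapsTo g s s) {u : α}
    (hu : u ∈ s) {a b : ℕ} (hba : b ≤ a) : f^[a] (g^[b] u) = f^[a - b] u := by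
  obtain ⟨c, rfl⟩ := Nat.exists_eq_add_of_le' hba
  rw [Function.iterate_add_apply, h.iterate hg b hu, Nat.add_sub_cancel]

theorem iterate_apply_iterate_of_ge (h : LeftInvOn f g s) (hg : MapsTo g s s) {u : α}
    (hu : u ∈ s) {a b : ℕ} (hab : a ≤ b) : f^[a] (g^[b] u) = g^[b - a] u := by
  obtain ⟨c, rfl⟩ := Nat.exists_eq_add_of_le hab
  rw [Function.iterate_add_apply, h.iterate hg a (hg.iterate c hu), Nat.add_sub_cancel_left]

end Set.LeftInvOn

theorem exists_forall_mem_of_isOpen_of_dense {X ι : Type*} [TopologicalSpace X] [Nonempty X]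
    [BaireSpace X] [SecondCountableTopology X] [Countable ι] {E : Set X → ι → Set X}
    (hopen : ∀ V M, IsOpen V → IsOpen (E V M))
    (hdense : ∀ V M, IsOpen V → V.Nonempty → Dense (E V M))
    (hmono : ∀ M, Monotone (E · M)) :
    ∃ x, ∀ U, IsOpen U → U.Nonempty → ∀ M, x ∈ E U M := by
  obtain ⟨b, hbc, hbe, hb⟩ := TopologicalSpace.exists_countable_basis X
  have : Countable b := hbc.to_subtype
  have hdenseInter : Dense (⋂ p : b × ι, E p.1 p.2) :=
    dense_iInter_of_isOpen (fun p => hopen _ _ (hb.isOpen p.1.2))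
      (fun p => hdense _ _ (hb.isOpen p.1.2) (nonempty_iff_ne_empty.2 fun h => hbe (h ▸ p.1.2)))
  obtain ⟨x, hx⟩ := hdenseInter.nonempty
  refine ⟨x, fun U hU ⟨y, hy⟩ M => ?_⟩
  obtain ⟨V, hVb, -, hVU⟩ := hb.exists_subset_of_mem_open hy hU
  exact hmono M hVU (mem_iInter.1 hx (⟨V, hVb⟩, M))

section APReturns

variable {R X : Type*} [Semiring R] [AddCommMonoid X] [Module R X] [TopologicalSpace X]

def apReturnSet (T : X →L[R] X) (V : Set X) (M : ℕ) : Set X :=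
  {x | ∃ q, 1 ≤ q ∧ ∀ j ∈ Finset.Icc 1 M, (T ^ (j * q)) x ∈ V}

theorem apReturnSet_mono (T : X →L[R] X) (M : ℕ) : Monotone (apReturnSet T · M) :=
  fun _ _ hVU _ ⟨q, hq, hx⟩ => ⟨q, hq, fun j hj => hVU (hx j hj)⟩

theorem isOpen_apReturnSet (T : X →L[R] X) {V : Set X} (hV : IsOpen V) (M : ℕ) :
    IsOpen (apReturnSet T V M) := by
  refine isOpen_iff_mem_nhds.2 fun x ⟨q, hq, hx⟩ => ?_
  have hnear : ∀ᶠ y in 𝓝 x, ∀ j ∈ Finset.Icc 1 M, (T ^ (j * q)) y ∈ V :=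
    (eventually_all_finset _).2 fun j hj =>
      (T ^ (j * q)).continuous.continuousAt.preimage_mem_nhds (hV.mem_nhds (hx j hj))
  filter_upwards [hnear] with y hy using ⟨q, hq, hy⟩

variable {T : X →L[R] X} {S : X → X} {X₀ : Set X} {F : Filter ℕ} {Q : ℕ → ℕ} {M : ℕ}

theorem tendsto_pow_apply_iterate_mul (hS : MapsTo S X₀ X₀) (hTS : LeftInvOn T S X₀)
    {u : X} (hu : u ∈ X₀) (hT0 : Tendsto (fun n => (T ^ n) u) F (𝓝 0))
    (hS0 : Tendsto (fun n => S^[n] u) F (𝓝 0))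
    (hQ : ∀ j ∈ Finset.Icc 1 M, Tendsto (fun n => j * Q n) atTop F)
    {i j : ℕ} (hi : i ∈ Finset.Icc 1 M) (hj : j ∈ Finset.Icc 1 M) :
    Tendsto (fun n => (T ^ (j * Q n)) (S^[i * Q n] u)) atTop (𝓝 (if i = j then u else 0)) := by
  simp only [Finset.mem_Icc] at hi hj
  simp only [FunLike.coe_pow_eq_iterate] at hT0 ⊢
  rcases lt_trichotomy i j with hij | rfl | hij
  · have hd : j - i ∈ Finset.Icc 1 M := Finset.mem_Icc.2 ⟨by omega, by omega⟩
    simp only [if_neg hij.ne, hTS.iterate_apply_iterate_of_le hS hu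
      (Nat.mul_le_mul_right _ hij.le), ← Nat.sub_mul]
    exact hT0.comp (hQ _ hd)
  · simp only [if_true, hTS.iterate hS _ hu]
    exact tendsto_const_nhds
  · have hd : i - j ∈ Finset.Icc 1 M := Finset.mem_Icc.2 ⟨by omega, by omega⟩
    simp only [if_neg hij.ne', hTS.iterate_apply_iterate_of_ge hS hu
      (Nat.mul_le_mul_right _ hij.le), ← Nat.sub_mul]
    exact hS0.comp (hQ _ hd)

theorem dense_apReturnSet [ContinuousAdd X] (hX₀ : Dense X₀) (hS : MapsTo S X₀ X₀)
    (hTS : LeftInvOn T S X₀) (hT0 : ∀ x ∈ X₀, Tendsto (fun n => (T ^ n) x) F (𝓝 0))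
    (hS0 : ∀ x ∈ X₀, Tendsto (fun n => S^[n] x) F (𝓝 0)) (hQpos : ∀ n, 1 ≤ Q n)
    (hQ : ∀ j ∈ Finset.Icc 1 M, Tendsto (fun n => j * Q n) atTop F)
    {V : Set X} (hV : IsOpen V) (hVne : V.Nonempty) : Dense (apReturnSet T V M) := by
  refine dense_iff_inter_open.2 fun W hW hWne => ?_
  obtain ⟨w, hwW, hw⟩ := hX₀.inter_open_nonempty W hW hWne
  obtain ⟨u, huV, hu⟩ := hX₀.inter_open_nonempty V hV hVne
  set x : ℕ → X := fun n => w + ∑ i ∈ Finset.Icc 1 M, S^[i * Q n] u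
  have hxw : Tendsto x atTop (𝓝 w) := by
    simpa using tendsto_const_nhds.add
      (tendsto_finsetSum (Finset.Icc 1 M) fun i hi => (hS0 u hu).comp (hQ i hi))
  have hTx : ∀ j ∈ Finset.Icc 1 M, Tendsto (fun n => (T ^ (j * Q n)) (x n)) atTop (𝓝 u) := by
    intro j hj
    have hlim := ((hT0 w hw).comp (hQ j hj)).add (tendsto_finsetSum (Finset.Icc 1 M)
      fun i hi => tendsto_pow_apply_iterate_mul hS hTS hu (hT0 u hu) (hS0 u hu) hQ hi hj)
    rw [Finset.sum_ite_eq', if_pos hj, zero_add] at hlim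
    simpa only [x, map_add, map_sum, Function.comp_def] using hlim
  have hW' : ∀ᶠ n in atTop, x n ∈ W := hxw.eventually (hW.mem_nhds hwW)
  have hV' : ∀ᶠ n in atTop, ∀ j ∈ Finset.Icc 1 M, (T ^ (j * Q n)) (x n) ∈ V :=
    (eventually_all_finset _).2 fun j hj => (hTx j hj).eventually (hV.mem_nhds huV)
  obtain ⟨n, hnW, hnV⟩ := (hW'.and hV').exists
  exact ⟨x n, hnW, Q n, hQpos n, hnV⟩

end APReturns

theorem AP_hypercyclicity_criterion_general
    {X : Type*} [AddCommGroup X] [Module ℝ X] [UniformSpace X] [IsUniformAddGroup X]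
    [CompleteSpace X] [TopologicalSpace.MetrizableSpace X] [TopologicalSpace.SeparableSpace X]
    (T : X →L[ℝ] X) (X₀ : Set X) (hX₀ : Dense X₀)
    (S : X → X) (hSmaps : ∀ x ∈ X₀, S x ∈ X₀)
    (hTS : ∀ x ∈ X₀, T (S x) = x)
    (mk : ℕ → ℕ)
    (hAP : ∀ m : ℕ, ∃ q : ℕ, 1 ≤ q ∧ ∀ j : ℕ, 1 ≤ j → j ≤ m → j * q ∈ Set.range mk)
    (hT0 : ∀ x ∈ X₀, Tendsto (fun k : ℕ => (T ^ mk k) x) atTop (𝓝 0))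
    (hS0 : ∀ x ∈ X₀, Tendsto (fun k : ℕ => S^[mk k] x) atTop (𝓝 0)) :
    ∃ x : X, ∀ U : Set X, IsOpen U → U.Nonempty →
        ContainsAPs {n : ℕ | (T ^ n) x ∈ U} := by
  have : (uniformity X).IsCountablyGenerated := IsUniformAddGroup.uniformity_countably_generated
  have : SecondCountableTopology X := UniformSpace.secondCountable_of_separable X
  have hdense (V : Set X) (M : ℕ) (hV : IsOpen V) (hVne : V.Nonempty) :
      Dense (apReturnSet T V M) := by
    obtain ⟨Q, hQpos, hQ⟩ := exists_tendsto_mul_atTop_inf_principal hAP M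
    exact dense_apReturnSet hX₀ hSmaps hTS
      (fun x hx => (hT0 x hx).atTop_inf_principal_range (g := fun n => (T ^ n) x))
      (fun x hx => (hS0 x hx).atTop_inf_principal_range (g := fun n => S^[n] x))
      hQpos hQ hV hVne
  obtain ⟨x, hx⟩ := exists_forall_mem_of_isOpen_of_dense
    (fun V M hV => isOpen_apReturnSet T hV M) hdense (apReturnSet_mono T)
  refine ⟨x, fun U hU hUne m => ?_⟩
  obtain ⟨q, hq, hqU⟩ := hx U hU hUne (m + 1)
  refine ⟨q, q, hq, hq, fun j hj => ?_⟩
  simpa [add_one_mul, add_comm] using hqU (j + 1) (Finset.mem_Icc.2 ⟨by omega, by omega⟩)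

theorem AP_hypercyclicity_criterion
    {X : Type*} [AddCommGroup X] [Module ℝ X] [UniformSpace X] [IsUniformAddGroup X]
    [ContinuousSMul ℝ X] [LocallyConvexSpace ℝ X] [CompleteSpace X]
    [TopologicalSpace.MetrizableSpace X] [TopologicalSpace.SeparableSpace X]
    (T : X →L[ℝ] X) (X₀ : Set X) (hX₀ : Dense X₀)
    (S : X → X) (hSmaps : ∀ x ∈ X₀, S x ∈ X₀)
    (hTS : ∀ x ∈ X₀, T (S x) = x)
    (mk : ℕ → ℕ) (hmono : StrictMono mk)
    (hAP : ∀ m : ℕ, ∃ q : ℕ, 1 ≤ q ∧ ∀ j : ℕ, 1 ≤ j → j ≤ m → j * q ∈ Set.range mk)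
    (hT0 : ∀ x ∈ X₀, Tendsto (fun k : ℕ => (T ^ mk k) x) atTop (𝓝 0))
    (hS0 : ∀ x ∈ X₀, Tendsto (fun k : ℕ => S^[mk k] x) atTop (𝓝 0)) :
    ∃ x : X, ∀ U : Set X, IsOpen U → U.Nonempty →
        ContainsAPs {n : ℕ | (T ^ n) x ∈ U} :=
  AP_hypercyclicity_criterion_general T X₀ hX₀ S hSmaps hTS mk hAP hT0 hS0
end
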